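/- arXiv:1302.5223 — 8 statements merged into one kernel-verified Lean document; each statement's English description precedes it below -/
import Mathlib

section
/- Let R ⊆ A be integral domains and Φ : A → R a retraction with finitely generated kernel. Suppose p is a nonzero nonunit of R (and a nonunit of A) such that A[1/p] is a polynomial ring in one variable over R[1/p]. Then there exists x ∈ Ker Φ with x ∉ pA such that A[1/p] = R[1/p][x]. -/
/-! Put `d = x₀ - Φ x₀`, an element of `ker Φ`. Every element of `ker Φ ∩ R[x₀]` is divisible by `d`
(its polynomial vanishes at `Φ x₀`), so, as `ker Φ` is finitely generated and `A[1/p] = R[1/p][x₀]`,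
a single power `p ^ N` carries all of `ker Φ` into `d A`. Hence `p ^ (N + 1) ∤ d`: otherwise
`d = p ^ (N + 1) y` with `y ∈ ker Φ`, and `p ^ (N + 1) y ∣ p ^ N y` makes `p` a unit. Writing
`d = p ^ k w` with `p ∤ w`, we get `w ∈ ker Φ` and `x₀ = Φ x₀ + p ^ k w ∈ R[w]`, so `w` is
transcendental and generates `A[1/p]` as well. -/

open Polynomial

theorem Ideal.FG.exists_pow_mul_mem {A : Type*} [CommRing A] {I J : Ideal A} (hI : I.FG)
    (p : A) (h : ∀ a ∈ I, ∃ n : ℕ, p ^ n * a ∈ J) : ∃ N : ℕ, ∀ a ∈ I, p ^ N * a ∈ J := by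
  let K : ℕ → Ideal A := fun n => J.colon {p ^ n}
  have hK : ∀ {n a}, a ∈ K n ↔ p ^ n * a ∈ J := by
    intro n a
    rw [Submodule.mem_colon_singleton, smul_eq_mul, mul_comm]
  have hmono : Monotone K := monotone_nat_of_le_succ fun n a ha => by
    rw [hK, pow_succ', mul_assoc]
    exact J.mul_mem_left p (hK.mp ha)
  have hle : I ≤ sSup (Set.range K) := by
    rw [sSup_range]
    exact fun a ha => (h a ha).elim fun n hn => Submodule.mem_iSup_of_mem n (hK.mpr hn)
  obtain ⟨_, ⟨N, rfl⟩, hN⟩ :=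
    (CompleteLattice.isCompactElement_iff_le_of_directed_sSup_le (α := Ideal A) I).mp
      ((Submodule.fg_iff_compact I).mp hI) _ (Set.range_nonempty K)
      (directedOn_range.mpr hmono.directed_le) hle
  exact ⟨N, fun a ha => hK.mp (hN ha)⟩

theorem sub_algebraMap_dvd_of_mem_adjoin {R A : Type*} [CommRing R] [CommRing A] [Algebra R A]
    {Φ : A →+* R} (hΦ : Function.LeftInverse Φ (algebraMap R A)) {x b : A}
    (hb : b ∈ Algebra.adjoin R {x}) (hΦb : Φ b = 0) : x - algebraMap R A (Φ x) ∣ b := by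
  rw [Algebra.adjoin_singleton_eq_range_aeval] at hb
  obtain ⟨f, rfl⟩ := hb
  have hroot : f.IsRoot (Φ x) := by
    have hΦR : Φ.comp (algebraMap R A) = RingHom.id R := RingHom.ext hΦ
    simpa [aeval_def, hom_eval₂, hΦR] using hΦb
  simpa using map_dvd (aeval x) (dvd_iff_isRoot.mpr hroot)

theorem RingHom.map_eq_zero_of_map_pow_mul_eq_zero {A B : Type*} [CommRing A] [CommRing B]
    [NoZeroDivisors B] (Φ : A →+* B) {p y : A} (hp : Φ p ≠ 0) {n : ℕ} (h : Φ (p ^ n * y) = 0) :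
    Φ y = 0 := by
  rw [map_mul, map_pow] at h
  exact (mul_eq_zero.mp h).resolve_left (pow_ne_zero _ hp)

theorem finiteMultiplicity_of_forall_dvd_pow_mul {A B : Type*} [CommRing A] [IsDomain A]
    [CommRing B] [NoZeroDivisors B] (Φ : A →+* B) {p d : A} (hp : ¬IsUnit p) (hΦp : Φ p ≠ 0)
    (hd : d ≠ 0) (hΦd : Φ d = 0) {N : ℕ} (hN : ∀ b, Φ b = 0 → d ∣ p ^ N * b) :
    FiniteMultiplicity p d := by
  refine ⟨N, fun ⟨y, hy⟩ => hp ?_⟩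
  have hΦy : Φ y = 0 := Φ.map_eq_zero_of_map_pow_mul_eq_zero hΦp (hy ▸ hΦd)
  have hy0 : p ^ N * y ≠ 0 :=
    mul_ne_zero (pow_ne_zero _ (ne_of_apply_ne Φ (by rwa [map_zero])))
      (right_ne_zero_of_mul (hy ▸ hd))
  rw [isUnit_iff_dvd_one, ← mul_dvd_mul_iff_right hy0, one_mul, ← mul_assoc, ← pow_succ', ← hy]
  exact hN y hΦy

theorem Transcendental.of_mem_adjoin_singleton {R S : Type*} [CommRing R] [NoZeroDivisors R]
    [CommRing S] [Algebra R S] {x y : S} (hx : Transcendental R x)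
    (hxy : x ∈ Algebra.adjoin R {y}) : Transcendental R y := fun hy =>
  hx (Algebra.isAlgebraic_adjoin_singleton_iff.mpr hy x hxy)

theorem stmt5_general {A : Type*} [CommRing A] [IsDomain A] (R : Subring A)
    (Φ : A →+* R) (hΦ : ∀ r : R, Φ (r : A) = r)
    (hfg : (RingHom.ker Φ).FG)
    (p : R) (hp0 : p ≠ 0) (hpA : ¬ IsUnit (p : A))
    (hloc : ∃ x₀ : A, Transcendental R x₀ ∧
      ∀ a : A, ∃ n : ℕ, (p : A) ^ n * a ∈ Algebra.adjoin R {x₀}) :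
    ∃ x : A, Φ x = 0 ∧ x ∉ Ideal.span {(p : A)} ∧ Transcendental R x ∧
      ∀ a : A, ∃ n : ℕ, (p : A) ^ n * a ∈ Algebra.adjoin R {x} := by
  obtain ⟨x₀, htr, hgen⟩ := hloc
  set d := x₀ - algebraMap R A (Φ x₀) with hd
  have hΦd : Φ d = 0 := by rw [hd, map_sub, Algebra.algebraMap_ofSubsemiring_apply, hΦ, sub_self]
  have hd0 : d ≠ 0 := fun h => htr (sub_eq_zero.mp h ▸ isAlgebraic_algebraMap _)
  obtain ⟨N, hN⟩ := hfg.exists_pow_mul_mem (J := Ideal.span {d}) (p : A) fun b hb =>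
    (hgen b).imp fun n hn => Ideal.mem_span_singleton.mpr <|
      sub_algebraMap_dvd_of_mem_adjoin hΦ hn (by rw [map_mul, RingHom.mem_ker.mp hb, mul_zero])
  have hΦp : Φ p ≠ 0 := by rwa [hΦ]
  obtain ⟨w, hw, hpw⟩ := (finiteMultiplicity_of_forall_dvd_pow_mul Φ hpA hΦp hd0 hΦd
    fun b hb => Ideal.mem_span_singleton.mp (hN b hb)).exists_eq_pow_mul_and_not_dvd
  have hx₀ : x₀ ∈ Algebra.adjoin R {w} := by
    have hx₀_eq : x₀ = algebraMap R A (p ^ multiplicity (p : A) d) * w + algebraMap R A (Φ x₀) := by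
      rw [map_pow, Algebra.algebraMap_ofSubsemiring_apply, ← hw, hd, sub_add_cancel]
    rw [hx₀_eq]
    exact add_mem (mul_mem (Subalgebra.algebraMap_mem _ _) (Algebra.self_mem_adjoin_singleton R w))
      (Subalgebra.algebraMap_mem _ _)
  exact ⟨w, Φ.map_eq_zero_of_map_pow_mul_eq_zero hΦp (hw ▸ hΦd),
    mt Ideal.mem_span_singleton.mp hpw, htr.of_mem_adjoin_singleton hx₀,
    fun a => (hgen a).imp fun n hn => Algebra.adjoin_le (Set.singleton_subset_iff.mpr hx₀) hn⟩

/-- Let `R ⊆ A` be integral domains and `Φ : A → R` a retraction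
with finitely generated kernel. Suppose `p` is a nonzero element of `R`, a nonunit
in `R` and in `A`, such that `A[1/p]` is a polynomial ring in one variable over
`R[1/p]`.  (We encode `A[1/p] = R[1/p][x₀]` with `x₀` transcendental over `R`, by:
every `a ∈ A` satisfies `pⁿ a ∈ R[x₀]` for some `n`.)  Then there exists
`x ∈ Ker Φ` with `x ∉ pA` such that `A[1/p] = R[1/p][x]`. -/
theorem stmt5 {A : Type*} [CommRing A] [IsDomain A] (R : Subring A)
    (Φ : A →+* R) (hΦ : ∀ r : R, Φ (r : A) = r)
    (hfg : (RingHom.ker Φ).FG)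
    (p : R) (hp0 : p ≠ 0) (hpR : ¬ IsUnit p) (hpA : ¬ IsUnit (p : A))
    (hloc : ∃ x₀ : A, Transcendental R x₀ ∧
      ∀ a : A, ∃ n : ℕ, (p : A) ^ n * a ∈ Algebra.adjoin R {x₀}) :
    ∃ x : A, Φ x = 0 ∧ x ∉ Ideal.span {(p : A)} ∧ Transcendental R x ∧
      ∀ a : A, ∃ n : ℕ, (p : A) ^ n * a ∈ Algebra.adjoin R {x} :=
  stmt5_general R Φ hΦ hfg p hp0 hpA hloc
end

section
/- Let R ⊆ A be integral domains with a retraction Φ : A → R, and let p ∈ R be a prime element of R that is also prime in A, with A[1/p] = R[1/p][x₀] a polynomial ring in one variable. Then pA ∩ R = pR and R/pR is algebraically closed in A/pA. -/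
open Polynomial

/-- Key lemma: if `Φ b = 0` and `b` satisfies a polynomial over `R` that is nonzero
mod `p` with value divisible by `p` in `A`, then `p ∣ b`. -/
lemma stmt6_key {A : Type*} [CommRing A] [IsDomain A] (R : Subring A)
    (Φ : A →+* R) (hΦ : ∀ r : R, Φ (r : A) = r)
    (p : R) (hpA : Prime (p : A)) :
    ∀ n : ℕ, ∀ g : Polynomial R, g.natDegree ≤ n →
      g.map ((Ideal.Quotient.mk (Ideal.span {(p : A)})).comp R.subtype) ≠ 0 →
      ∀ b : A, Φ b = 0 → (p : A) ∣ Polynomial.aeval b g → (p : A) ∣ b := by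
  set ψ := (Ideal.Quotient.mk (Ideal.span {(p : A)})).comp R.subtype with hψ
  have hΦcomp : Φ.comp (algebraMap R A) = RingHom.id R := RingHom.ext fun r => hΦ r
  intro n
  induction n with
  | zero =>
      intro g hdeg hg b hb hdvd
      exfalso
      have hg0 : g = Polynomial.C (g.coeff 0) :=
        Polynomial.eq_C_of_natDegree_eq_zero (Nat.le_zero.mp hdeg)
      have hΦval : Φ (Polynomial.aeval b g) = g.coeff 0 := by
        rw [Polynomial.aeval_def, Polynomial.hom_eval₂, hΦcomp, hb,
          ← Polynomial.eval_map, Polynomial.map_id, ← Polynomial.coeff_zero_eq_eval_zero]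
      obtain ⟨c, hc⟩ := hdvd
      have hg0A : (g.coeff 0 : A) = (p : A) * (Φ c : A) := by
        have := hΦval
        rw [hc, map_mul, hΦ p] at this
        rw [← this]; push_cast; ring_nf
      have hψ0 : ψ (g.coeff 0) = 0 := by
        rw [hψ]
        show Ideal.Quotient.mk (Ideal.span {(p : A)}) ((g.coeff 0 : A)) = 0
        rw [Ideal.Quotient.eq_zero_iff_mem, Ideal.mem_span_singleton]
        exact ⟨(Φ c : A), hg0A⟩
      apply hg
      rw [hg0]
      simp [Polynomial.map_C, hψ0]
  | succ n ih =>
      intro g hdeg hg b hb hdvd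
      have hΦval : Φ (Polynomial.aeval b g) = g.coeff 0 := by
        rw [Polynomial.aeval_def, Polynomial.hom_eval₂, hΦcomp, hb,
          ← Polynomial.eval_map, Polynomial.map_id, ← Polynomial.coeff_zero_eq_eval_zero]
      obtain ⟨c, hc⟩ := hdvd
      have hg0A : (g.coeff 0 : A) = (p : A) * (Φ c : A) := by
        have := hΦval
        rw [hc, map_mul, hΦ p] at this
        rw [← this]; push_cast; ring_nf
      have hψ0 : ψ (g.coeff 0) = 0 := by
        rw [hψ]
        show Ideal.Quotient.mk (Ideal.span {(p : A)}) ((g.coeff 0 : A)) = 0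
        rw [Ideal.Quotient.eq_zero_iff_mem, Ideal.mem_span_singleton]
        exact ⟨(Φ c : A), hg0A⟩
      have hsplit : b * Polynomial.aeval b g.divX + (g.coeff 0 : A) = Polynomial.aeval b g := by
        conv_rhs => rw [← Polynomial.X_mul_divX_add g]
        rw [map_add, map_mul, Polynomial.aeval_X, Polynomial.aeval_C]
        rfl
      have hdvd2 : (p : A) ∣ b * Polynomial.aeval b g.divX := by
        have heq : b * Polynomial.aeval b g.divX = Polynomial.aeval b g - (g.coeff 0 : A) := by
          rw [← hsplit]; ring
        rw [heq, hc, hg0A]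
        exact dvd_sub (Dvd.intro c rfl) (Dvd.intro _ rfl)
      rcases hpA.2.2 _ _ hdvd2 with h | h
      · exact h
      · have hmapne : (g.divX).map ψ ≠ 0 := by
          obtain ⟨j, hj⟩ : ∃ j, ψ (g.coeff j) ≠ 0 := by
            by_contra hall
            push_neg at hall
            apply hg
            ext k
            simp [Polynomial.coeff_map, hall]
          have hjne : j ≠ 0 := by
            intro h0; rw [h0] at hj; exact hj hψ0
          intro h0
          have hco : ((g.divX).map ψ).coeff (j - 1) = 0 := by rw [h0]; simp
          rw [Polynomial.coeff_map, Polynomial.coeff_divX,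
            Nat.sub_add_cancel (Nat.one_le_iff_ne_zero.mpr hjne)] at hco
          exact hj hco
        have hdegdiv : g.divX.natDegree ≤ n := by
          have := Polynomial.natDegree_divX_eq_natDegree_tsub_one (p := g)
          omega
        exact ih g.divX hdegdiv hmapne b hb h

/-- Let `R ⊆ A` be integral domains with a retraction `Φ : A → R`,
and let `p ∈ R` be a prime element of `R` which is also prime in `A`, with
`A[1/p] = R[1/p][x₀]` a polynomial ring in one variable (encoded: `x₀` is
transcendental over `R` and every `a ∈ A` satisfies `pⁿ a ∈ R[x₀]` for some `n`).
Then `pA ∩ R = pR` and `R/pR` is algebraically closed in `A/pA` (every element of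
`A/pA` algebraic over the image of `R/pR` lies in that image). -/
theorem stmt6 {A : Type*} [CommRing A] [IsDomain A] (R : Subring A)
    (Φ : A →+* R) (hΦ : ∀ r : R, Φ (r : A) = r)
    (p : R) (hpR : Prime p) (hpA : Prime (p : A))
    (hloc : ∃ x₀ : A, Transcendental R x₀ ∧
      ∀ a : A, ∃ n : ℕ, (p : A) ^ n * a ∈ Algebra.adjoin R {x₀}) :
    (∀ r : R, (r : A) ∈ Ideal.span {(p : A)} → r ∈ Ideal.span {p}) ∧
    (∀ z : A ⧸ Ideal.span {(p : A)},
      IsAlgebraic (RingHom.range ((Ideal.Quotient.mk (Ideal.span {(p : A)})).comp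
        R.subtype)) z →
      z ∈ RingHom.range ((Ideal.Quotient.mk (Ideal.span {(p : A)})).comp R.subtype)) := by
  constructor
  · intro r hr
    rw [Ideal.mem_span_singleton] at hr ⊢
    obtain ⟨a, ha⟩ := hr
    refine ⟨Φ a, ?_⟩
    have : Φ (r : A) = Φ ((p : A) * a) := by rw [ha]
    rw [hΦ r, map_mul, hΦ p] at this
    exact this
  · intro z hz
    obtain ⟨a, rfl⟩ := Ideal.Quotient.mk_surjective z
    set ψ := (Ideal.Quotient.mk (Ideal.span {(p : A)})).comp R.subtype with hψdef
    obtain ⟨f, hf0, hfz⟩ := hz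
    have hlift : f.map (RingHom.range ψ).subtype ∈ Polynomial.lifts ψ := by
      rw [Polynomial.lifts_iff_coeff_lifts]
      intro m
      rw [Polynomial.coeff_map]
      exact (f.coeff m).2
    obtain ⟨g, hgmap⟩ := (Polynomial.mem_lifts _).mp hlift
    have hmapne : g.map ψ ≠ 0 := by
      rw [hgmap]
      intro h0
      apply hf0
      have hinj : Function.Injective ((RingHom.range ψ).subtype) := Subtype.coe_injective
      exact Polynomial.map_injective _ hinj (by simpa using h0)
    have hval : (p : A) ∣ Polynomial.aeval a g := by
      rw [← Ideal.mem_span_singleton, ← Ideal.Quotient.eq_zero_iff_mem]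
      have h1 : (Ideal.Quotient.mk (Ideal.span {(p : A)})) (Polynomial.aeval a g)
          = Polynomial.eval₂ ψ (Ideal.Quotient.mk _ a) g := by
        rw [Polynomial.aeval_def, Polynomial.hom_eval₂]
        rfl
      rw [h1, ← Polynomial.eval_map, hgmap, Polynomial.eval_map]
      exact hfz
    set r := Φ a with hr
    set b := a - (r : A) with hb
    have hΦb : Φ b = 0 := by
      rw [hb, map_sub, hΦ r, hr, sub_self]
    set h := g.comp (Polynomial.X + Polynomial.C r) with hh
    have hvalh : (p : A) ∣ Polynomial.aeval b h := by
      rw [hh, Polynomial.aeval_comp]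
      have heval : Polynomial.aeval b (Polynomial.X + Polynomial.C r) = a := by
        rw [map_add, Polynomial.aeval_X, Polynomial.aeval_C]
        show b + (r : A) = a
        rw [hb]; ring
      rw [heval]
      exact hval
    have hmaphne : h.map ψ ≠ 0 := by
      rw [hh, Polynomial.map_comp]
      have hXC : (Polynomial.X + Polynomial.C r).map ψ
          = Polynomial.X + Polynomial.C (ψ r) := by
        rw [Polynomial.map_add, Polynomial.map_X, Polynomial.map_C]
      rw [hXC, ← Polynomial.taylor_apply]
      intro h0
      apply hmapne
      exact Polynomial.taylor_injective (ψ r) (by simpa using h0)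
    have hdvdb : (p : A) ∣ b :=
      stmt6_key R Φ hΦ p hpA h.natDegree h le_rfl hmaphne b hΦb hvalh
    refine ⟨r, ?_⟩
    show Ideal.Quotient.mk _ ((r : A)) = Ideal.Quotient.mk _ a
    rw [Ideal.Quotient.mk_eq_mk_iff_sub_mem, Ideal.mem_span_singleton]
    have : (r : A) - a = -b := by rw [hb]; ring
    rw [this]
    exact dvd_neg.mpr hdvdb
end

section
/- Let R ⊆ A be integral domains with a retraction Φ : A → R. Suppose p ∈ R is prime both in R and in A, and A[1/p] = R[1/p]^{[1]}. If ∩_{n≥0} pⁿA = (0), then there exists x ∈ Ker Φ with x ∉ pA such that A = R[x] and A is a polynomial ring in one variable over R. -/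
open Polynomial

/-- Key division lemma: if `Φ x = 0`, `x ∉ pA` and `p * a ∈ R[x]`, then `a ∈ R[x]`. -/
private theorem stmt7_key {A : Type*} [CommRing A] [IsDomain A] (R : Subring A)
    (Φ : A →+* R) (hΦ : ∀ r : R, Φ (r : A) = r)
    (p : R) (hpA : Prime (p : A)) (x : A)
    (hx : x ∉ Ideal.span {(p : A)}) (hΦx : Φ x = 0) :
    ∀ (d : ℕ) (f : Polynomial R) (a : A), f.natDegree ≤ d →
      (p : A) * a = Polynomial.aeval x f → a ∈ Algebra.adjoin R {x} := by
  have halg : ∀ r : R, algebraMap R A r = (r : A) := fun r => rfl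
  intro d
  induction d with
  | zero =>
    intro f a hdeg hpa
    have hf : f = C (f.coeff 0) := by
      rcases Polynomial.natDegree_eq_zero.mp (Nat.le_zero.mp hdeg) with ⟨c, rfl⟩
      simp
    -- apply Φ to the equation
    have hc : (p : R) * Φ a = f.coeff 0 := by
      have := congrArg Φ hpa
      rw [map_mul, hΦ p, Polynomial.aeval_def, Polynomial.hom_eval₂, hΦx,
        Polynomial.eval₂_at_zero, RingHom.comp_apply, halg, hΦ] at this
      exact this
    have : (p : A) * a = (p : A) * ((Φ a : R) : A) := by
      rw [hpa, hf, Polynomial.aeval_C, halg, ← hc]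
      push_cast
      ring
    have := mul_left_cancel₀ hpA.ne_zero this
    rw [this]
    exact Subalgebra.algebraMap_mem _ (Φ a)
  | succ d ih =>
    intro f a hdeg hpa
    have hc : (p : R) * Φ a = f.coeff 0 := by
      have := congrArg Φ hpa
      rw [map_mul, hΦ p, Polynomial.aeval_def, Polynomial.hom_eval₂, hΦx,
        Polynomial.eval₂_at_zero, RingHom.comp_apply, halg, hΦ] at this
      exact this
    -- p * (a - Φ a) = x * aeval x f.divX
    have hsplit : (p : A) * (a - ((Φ a : R) : A)) = x * Polynomial.aeval x f.divX := by
      have hf := f.divX_mul_X_add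
      have : (p : A) * a = Polynomial.aeval x f.divX * x + ((f.coeff 0 : R) : A) := by
        conv_lhs => rw [hpa, ← hf]
        rw [map_add, map_mul, Polynomial.aeval_X, Polynomial.aeval_C, halg]
      rw [mul_sub, this, ← hc]
      push_cast
      ring
    have hdvd : (p : A) ∣ x * Polynomial.aeval x f.divX := ⟨_, hsplit.symm⟩
    have hpx : ¬ (p : A) ∣ x := by
      rwa [Ideal.mem_span_singleton] at hx
    obtain ⟨c, hcdef⟩ : (p : A) ∣ Polynomial.aeval x f.divX :=
      (hpA.dvd_or_dvd hdvd).resolve_left hpx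
    have hac : a - ((Φ a : R) : A) = x * c := by
      apply mul_left_cancel₀ hpA.ne_zero
      rw [hsplit, hcdef]; ring
    have hcmem : c ∈ Algebra.adjoin R {x} := by
      apply ih f.divX c
      · have := Polynomial.natDegree_divX_eq_natDegree_tsub_one (p := f)
        omega
      · exact hcdef.symm
    have : a = ((Φ a : R) : A) + x * c := by rw [← hac]; ring
    rw [this]
    exact add_mem (Subalgebra.algebraMap_mem _ (Φ a))
      (mul_mem (Algebra.self_mem_adjoin_singleton R x) hcmem)

private theorem stmt7_pow {A : Type*} [CommRing A] [IsDomain A] (R : Subring A)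
    (Φ : A →+* R) (hΦ : ∀ r : R, Φ (r : A) = r)
    (p : R) (hpA : Prime (p : A)) (x : A)
    (hx : x ∉ Ideal.span {(p : A)}) (hΦx : Φ x = 0) :
    ∀ (n : ℕ) (a : A), (p : A) ^ n * a ∈ Algebra.adjoin R {x} →
      a ∈ Algebra.adjoin R {x} := by
  intro n
  induction n with
  | zero => intro a ha; simpa using ha
  | succ n ih =>
    intro a ha
    have h1 : (p : A) * ((p : A) ^ n * a) ∈ Algebra.adjoin R {x} := by
      have : (p : A) * ((p : A) ^ n * a) = (p : A) ^ (n + 1) * a := by ring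
      rwa [this]
    rw [Algebra.adjoin_singleton_eq_range_aeval] at h1
    obtain ⟨f, hf⟩ := h1
    exact ih a (stmt7_key R Φ hΦ p hpA x hx hΦx f.natDegree f _ le_rfl hf.symm)

/-- Let `R ⊆ A` be integral domains with a retraction `Φ : A → R`.
Suppose `p ∈ R` is prime both in `R` and in `A`, and `A[1/p] = R[1/p]^{[1]}`
(encoded: there is `x₀` transcendental over `R` with `pⁿ a ∈ R[x₀]` for every
`a ∈ A` and some `n`).  If `⋂ₙ pⁿA = (0)`, then there exists `x ∈ Ker Φ` with
`x ∉ pA` such that `A = R[x]` is a polynomial ring in one variable over `R`. -/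
theorem stmt7 {A : Type*} [CommRing A] [IsDomain A] (R : Subring A)
    (Φ : A →+* R) (hΦ : ∀ r : R, Φ (r : A) = r)
    (p : R) (hpR : Prime p) (hpA : Prime (p : A))
    (hloc : ∃ x₀ : A, Transcendental R x₀ ∧
      ∀ a : A, ∃ n : ℕ, (p : A) ^ n * a ∈ Algebra.adjoin R {x₀})
    (hsep : ∀ a : A, (∀ n : ℕ, a ∈ Ideal.span {(p : A) ^ n}) → a = 0) :
    ∃ x : A, Φ x = 0 ∧ x ∉ Ideal.span {(p : A)} ∧ Transcendental R x ∧
      Algebra.adjoin R {x} = ⊤ := by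
  have halg : ∀ r : R, algebraMap R A r = (r : A) := fun r => rfl
  obtain ⟨x₀, hx₀t, hx₀⟩ := hloc
  set r₀ : R := Φ x₀ with hr₀
  set y : A := x₀ - (r₀ : A) with hy
  -- y is transcendental over R
  have hyt : Transcendental R y := by
    have h1 : Transcendental R (Polynomial.aeval x₀ (X - C r₀)) := by
      apply hx₀t.aeval (X - C r₀)
      · rw [Polynomial.natDegree_X_sub_C]; exact one_ne_zero
      · rw [Polynomial.leadingCoeff_X_sub_C]; exact one_mem _
    have h2 : Polynomial.aeval x₀ (X - C r₀) = y := by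
      simp [hy, halg]
    rwa [h2] at h1
  have hy0 : y ≠ 0 := fun h => hyt (h ▸ isAlgebraic_zero)
  -- find minimal n with y ∉ pⁿA
  have hex : ∃ n : ℕ, y ∉ Ideal.span {(p : A) ^ n} := by
    by_contra h
    push_neg at h
    exact hy0 (hsep y h)
  classical
  set n := Nat.find hex with hn
  have hnspec : y ∉ Ideal.span {(p : A) ^ n} := Nat.find_spec hex
  have hn0 : n ≠ 0 := by
    intro h
    apply hnspec
    rw [h, pow_zero, Ideal.span_singleton_one]
    exact Submodule.mem_top
  have hmem : y ∈ Ideal.span {(p : A) ^ (n - 1)} := by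
    by_contra h
    exact (Nat.find_min hex (show n - 1 < n by omega)) h
  rw [Ideal.mem_span_singleton] at hmem
  obtain ⟨x, hxy⟩ := hmem
  -- x ∉ pA
  have hxp : x ∉ Ideal.span {(p : A)} := by
    intro h
    rw [Ideal.mem_span_singleton] at h
    obtain ⟨b, hb⟩ := h
    apply hnspec
    rw [Ideal.mem_span_singleton]
    refine ⟨b, ?_⟩
    rw [hxy, hb]
    have : (p : A) ^ n = (p : A) ^ (n - 1) * (p : A) := by
      conv_lhs => rw [show n = (n - 1) + 1 by omega]
      ring
    rw [this]; ring
  -- Φ x = 0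
  have hΦy : Φ y = 0 := by
    rw [hy, map_sub, hΦ, hr₀, sub_self]
  have hΦx : Φ x = 0 := by
    have h1 : Φ y = p ^ (n - 1) * Φ x := by
      rw [hxy, map_mul, map_pow, hΦ p]
    rw [hΦy] at h1
    have hp0 : (p : R) ^ (n - 1) ≠ 0 := pow_ne_zero _ hpR.ne_zero
    exact (mul_eq_zero.mp h1.symm).resolve_left hp0
  -- x is transcendental
  have hxt : Transcendental R x := by
    intro hxalg
    obtain ⟨f, hf0, hfx⟩ := hxalg
    apply hyt
    refine ⟨f.scaleRoots (p ^ (n - 1)), Polynomial.scaleRoots_ne_zero hf0 _, ?_⟩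
    have := Polynomial.scaleRoots_aeval_eq_zero (R := R) (A := A)
      (r := p ^ (n - 1)) hfx
    have hcast : ((p ^ (n - 1) : R) : A) = (p : A) ^ (n - 1) := by push_cast; ring
    rwa [halg, hcast, ← hxy] at this
  -- adjoin R {x₀} ≤ adjoin R {x}
  have hx₀eq : x₀ = (p : A) ^ (n - 1) * x + (r₀ : A) :=
    eq_add_of_sub_eq (by rw [← hy, hxy])
  have hsub : Algebra.adjoin R {x₀} ≤ Algebra.adjoin R {x} := by
    apply Algebra.adjoin_le
    intro z hz
    rw [Set.mem_singleton_iff] at hz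
    rw [hz, hx₀eq]
    refine add_mem (mul_mem ?_ (Algebra.self_mem_adjoin_singleton R x))
      (Subalgebra.algebraMap_mem _ r₀)
    exact pow_mem (Subalgebra.algebraMap_mem _ p) _
  refine ⟨x, hΦx, hxp, hxt, ?_⟩
  rw [eq_top_iff]
  intro a _
  obtain ⟨m, hm⟩ := hx₀ a
  exact stmt7_pow R Φ hΦ p hpA x hxp hΦx m a (hsub hm)
end

section
/- Let R ⊆ A be integral domains with a retraction Φ : A → R whose kernel is a finitely generated ideal. Suppose p ∈ R is prime in both R and A, and A[1/p] = R[1/p]^{[1]}. Then A = R[x] = R^{[1]} for some x ∈ Ker Φ. -/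
/-!
Replace `x₀` by `y = x₀ - Φ x₀ ∈ ker Φ`, so that `R[y] = R[x₀]`. For `i ∈ ker Φ` some `pᵐ i` lies in
`R[y] ∩ ker Φ ⊆ y A`, and since `ker Φ` is finitely generated one exponent `n` works for all `i`.
This bounds the `p`-adic multiplicity of `y` (were `y = pⁿ⁺¹ z`, then `pz ∣ z`), so `y = pᵏ x`
with `p ∤ x`, and `x ∈ ker Φ` because `ker Φ` is prime and `p ∉ ker Φ`. Now `x₀ ∈ R[x]`, so `x`
is transcendental. Finally `R[x]` is `p`-saturated in `A`: if `p ∣ f(x)` then `p` divides the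
constant term `Φ (f x)`, and since `p ∤ x` it divides every coefficient of `f`. As
`A = ⋃ₙ p⁻ⁿ R[x₀]`, this gives `R[x] = A`.
-/

open Polynomial Algebra

theorem Submodule.FG.exists_pow_smul_mem {R M : Type*} [CommSemiring R] [AddCommMonoid M]
    [Module R M] {N N' : Submodule R M} (hN : N.FG) (r : R)
    (h : ∀ m ∈ N, ∃ k : ℕ, r ^ k • m ∈ N') : ∃ k : ℕ, ∀ m ∈ N, r ^ k • m ∈ N' := by
  let chain : ℕ →o Submodule R M :=
    ⟨fun k ↦ N ⊓ N'.comap (r ^ k • LinearMap.id), monotone_nat_of_le_succ fun k m hm ↦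
      ⟨hm.1, by simpa [pow_succ', mul_smul] using N'.smul_mem r hm.2⟩⟩
  have hsup : iSup chain = N := le_antisymm (iSup_le fun _ ↦ inf_le_left) fun m hm ↦
    have ⟨k, hk⟩ := h m hm
    Submodule.mem_iSup_of_mem (p := chain) k ⟨hm, by simpa using hk⟩
  obtain ⟨k, hk⟩ := hN.stabilizes_of_iSup_eq chain hsup
  exact ⟨k, fun m hm ↦ by simpa using ((hk.le hm).2 : m ∈ N'.comap (r ^ k • LinearMap.id))⟩

theorem finiteMultiplicity_of_dvd_pow_mul {A : Type*} [CommRing A] [IsDomain A] {p y : A}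
    (hp : Prime p) {I : Ideal A} [hI : I.IsPrime] (hpI : p ∉ I) (hyI : y ∈ I) (hy : y ≠ 0)
    {n : ℕ} (hdvd : ∀ i ∈ I, y ∣ p ^ n * i) : FiniteMultiplicity p y := by
  refine ⟨n, fun ⟨z, hz⟩ ↦ hp.not_isUnit (isUnit_of_dvd_one ?_)⟩
  have hzI : z ∈ I := (hI.mem_or_mem (hz ▸ hyI)).resolve_left (mt (hI.mem_of_pow_mem _) hpI)
  have hz0 : p ^ n * z ≠ 0 := by rintro h; simp_all [pow_succ]
  have : p * (p ^ n * z) ∣ 1 * (p ^ n * z) := by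
    simpa [hz, pow_succ, mul_assoc, mul_left_comm] using hdvd z hzI
  exact (mul_dvd_mul_iff_right hz0).mp this

theorem Transcendental.of_mem_adjoin_singleton_s8 {R A : Type*} [CommRing R] [IsDomain R]
    [CommRing A] [Algebra R A] {x₀ x : A} (hx₀ : Transcendental R x₀) (h : x₀ ∈ adjoin R {x}) :
    Transcendental R x := fun hx ↦
  hx₀ (adjoin_singleton_le (S := Subalgebra.algebraicClosure R A) hx h)

namespace AlgHom

variable {R A : Type*} [CommRing R] [CommRing A] [Algebra R A] (Φ : A →ₐ[R] R)

theorem apply_aeval_eq_coeff_zero {x : A} (hx : Φ x = 0) (f : R[X]) :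
    Φ (aeval x f) = f.coeff 0 := by
  rw [← aeval_algHom_apply, hx, coeff_zero_eq_aeval_zero]

theorem sub_algebraMap_dvd_of_mem_adjoin {x z : A} (hz : z ∈ adjoin R {x}) :
    x - algebraMap R A (Φ x) ∣ z - algebraMap R A (Φ z) := by
  obtain ⟨f, rfl⟩ := (adjoin_singleton_eq_range_aeval R x ▸ hz :)
  simpa [← aeval_algHom_apply] using map_dvd (aeval x) (X_sub_C_dvd_sub_C_eval (a := Φ x) (p := f))

variable {p : R} {x : A} (hx : Φ x = 0)
include hx

theorem dvd_coeff_zero_of_dvd_aeval {f : R[X]} (h : algebraMap R A p ∣ aeval x f) :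
    p ∣ f.coeff 0 := by
  simpa [apply_aeval_eq_coeff_zero Φ hx] using map_dvd Φ h

/-- `x * f.divX(x) = f(x) - f(0)` with `p ∣ f(0)`, and `p ∤ x` gives `p ∣ f.divX(x)`. -/
theorem dvd_coeff_of_dvd_aeval (hp : Prime (algebraMap R A p))
    (hpx : ¬ algebraMap R A p ∣ x) (j : ℕ) :
    ∀ f : R[X], algebraMap R A p ∣ aeval x f → p ∣ f.coeff j := by
  induction j with
  | zero => exact fun f h ↦ dvd_coeff_zero_of_dvd_aeval Φ hx h
  | succ j ih =>
    intro f h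
    rw [← coeff_divX]
    refine ih _ ((hp.dvd_mul.mp ?_).resolve_left hpx)
    have hsplit : x * aeval x f.divX = aeval x f - algebraMap R A (f.coeff 0) := by
      have := congrArg (aeval x) (X_mul_divX_add f)
      simp only [map_add, map_mul, aeval_X, aeval_C] at this
      rw [← this, add_sub_cancel_right]
    rw [hsplit]
    exact dvd_sub h (map_dvd _ (dvd_coeff_zero_of_dvd_aeval Φ hx h))

theorem mem_adjoin_of_mul_mem [IsDomain A] (hp : Prime (algebraMap R A p))
    (hpx : ¬ algebraMap R A p ∣ x) {a : A} (ha : algebraMap R A p * a ∈ adjoin R {x}) :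
    a ∈ adjoin R {x} := by
  obtain ⟨f, hf⟩ := (adjoin_singleton_eq_range_aeval R x ▸ ha :)
  obtain ⟨g, rfl⟩ := (C_dvd_iff_dvd_coeff p f).mpr fun j ↦
    dvd_coeff_of_dvd_aeval Φ hx hp hpx j f ⟨a, hf⟩
  rw [adjoin_singleton_eq_range_aeval]
  refine ⟨g, mul_left_cancel₀ hp.ne_zero ?_⟩
  simpa using hf

theorem mem_adjoin_of_pow_mul_mem [IsDomain A] (hp : Prime (algebraMap R A p))
    (hpx : ¬ algebraMap R A p ∣ x) {a : A} (n : ℕ)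
    (ha : algebraMap R A p ^ n * a ∈ adjoin R {x}) : a ∈ adjoin R {x} := by
  induction n generalizing a with
  | zero => simpa using ha
  | succ n ih =>
    exact mem_adjoin_of_mul_mem Φ hx hp hpx (ih (by rwa [← mul_assoc, ← pow_succ]))

end AlgHom

theorem stmt8_general {A : Type*} [CommRing A] [IsDomain A] (R : Subring A)
    (Φ : A →+* R) (hΦ : ∀ r : R, Φ (r : A) = r)
    (hfg : (RingHom.ker Φ).FG)
    (p : R) (hpA : Prime (p : A))
    (hloc : ∃ x₀ : A, Transcendental R x₀ ∧
      ∀ a : A, ∃ n : ℕ, (p : A) ^ n * a ∈ Algebra.adjoin R {x₀}) :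
    ∃ x : A, Φ x = 0 ∧ Transcendental R x ∧ Algebra.adjoin R {x} = ⊤ := by
  obtain ⟨x₀, hx₀, hsat⟩ := hloc
  let Ψ : A →ₐ[R] R := { Φ with commutes' := hΦ }
  set y := x₀ - algebraMap R A (Ψ x₀) with hy
  have hker : (RingHom.ker Ψ).IsPrime := RingHom.ker_isPrime Ψ
  have hyI : y ∈ RingHom.ker Ψ := by simp [y]
  have hy0 : y ≠ 0 := fun h ↦ hx₀ (sub_eq_zero.mp h ▸ isAlgebraic_algebraMap _)
  have hpI : algebraMap R A p ∉ RingHom.ker Ψ := by simpa using hpA.ne_zero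
  obtain ⟨n, hn⟩ := Submodule.FG.exists_pow_smul_mem (N' := Ideal.span {y}) hfg (p : A)
    fun i hi ↦ by
      obtain ⟨m, hm⟩ := hsat i
      refine ⟨m, Ideal.mem_span_singleton.mpr ?_⟩
      simpa [show Ψ i = 0 from hi] using Ψ.sub_algebraMap_dvd_of_mem_adjoin hm
  obtain ⟨x, hyx, hpx⟩ := (finiteMultiplicity_of_dvd_pow_mul hpA hpI hyI hy0 fun i hi ↦
    Ideal.mem_span_singleton.mp (hn i hi)).exists_eq_pow_mul_and_not_dvd
  have hxI : x ∈ RingHom.ker Ψ :=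
    (hker.mem_or_mem (hyx ▸ hyI)).resolve_left (mt (hker.mem_of_pow_mem _) hpI)
  have hx₀x : x₀ ∈ adjoin R {x} := by
    rw [← sub_add_cancel x₀ (algebraMap R A (Ψ x₀)), ← hy, hyx]
    exact add_mem (mul_mem (pow_mem (algebraMap_mem _ p) _) (self_mem_adjoin_singleton R x))
      (algebraMap_mem _ _)
  refine ⟨x, hxI, hx₀.of_mem_adjoin_singleton_s8 hx₀x, Algebra.eq_top_iff.mpr fun a ↦ ?_⟩
  obtain ⟨m, hm⟩ := hsat a
  exact Ψ.mem_adjoin_of_pow_mul_mem hxI hpA hpx m (adjoin_singleton_le hx₀x hm)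

/-- Let `R ⊆ A` be integral domains with a retraction `Φ : A → R`
whose kernel is a finitely generated ideal. Suppose `p ∈ R` is prime in both `R`
and `A`, and `A[1/p] = R[1/p]^{[1]}` (encoded: there is `x₀` transcendental over
`R` with `pⁿ a ∈ R[x₀]` for all `a ∈ A` and some `n`). Then `A = R[x] = R^{[1]}`
for some `x ∈ Ker Φ`. -/
theorem stmt8 {A : Type*} [CommRing A] [IsDomain A] (R : Subring A)
    (Φ : A →+* R) (hΦ : ∀ r : R, Φ (r : A) = r)
    (hfg : (RingHom.ker Φ).FG)
    (p : R) (hpR : Prime p) (hpA : Prime (p : A))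
    (hloc : ∃ x₀ : A, Transcendental R x₀ ∧
      ∀ a : A, ∃ n : ℕ, (p : A) ^ n * a ∈ Algebra.adjoin R {x₀}) :
    ∃ x : A, Φ x = 0 ∧ Transcendental R x ∧ Algebra.adjoin R {x} = ⊤ :=
  stmt8_general R Φ hΦ hfg p hpA hloc
end

section
/- Let R ⊆ A be integral domains with a retraction Φ : A → R with finitely generated kernel. Suppose p₁, …, p_n are elements of R that are prime in both R and A, and A[1/(p₁⋯p_n)] is a polynomial ring in one variable over R[1/(p₁⋯p_n)]. Then there exists x ∈ Ker Φ such that A = R[x] is a polynomial ring in one variable over R. -/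
/-!
Shifting `x₀` by the constant `Φ x₀` gives `x₁ ∈ Ker Φ` with `R[x₁] = R[x₀]`. An element of
`R[x₁]` killed by `Φ` is a multiple of `x₁`, so, `Ker Φ` being finitely generated, one power `fᵐ`
of `f = p₁⋯pₙ` maps `Ker Φ` into `x₁ A`. Divide `x₁` by the `pᵢ` as often as possible; this stops,
since any product of `pᵢ` dividing `x₁` divides `fᵐ`. The result is `x₁ = c x` with `c ∈ R` and
`x ∈ Ker Φ` divisible by no `pᵢ`, and primality of the `pᵢ` in `A` turns `x₁ ∣ fᵐ a` into `x ∣ a`: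
`Ker Φ = x A`. Hence `A = R + x A`, and induction on the degree of a polynomial expression of
`fᵏ a` in `x` gives `a ∈ R[x]`. Finally `x` is transcendental because `c x = x₁` is.
-/

open Polynomial

section Divisibility

variable {M : Type*} [CommMonoidWithZero M] [IsCancelMulZero M]

theorem Multiset.card_le_card_of_prod_dvd_prod {s t : Multiset M} (hs : ∀ a ∈ s, Prime a)
    (ht : ∀ b ∈ t, Prime b) (h : s.prod ∣ t.prod) : Multiset.card s ≤ Multiset.card t := by
  classical
  induction s using Multiset.induction_on generalizing t with
  | empty => simp
  | cons a s ih =>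
    have ha : Prime a := hs a (Multiset.mem_cons_self a s)
    rw [Multiset.prod_cons] at h
    obtain ⟨b, hb, hab⟩ := ha.exists_mem_multiset_dvd (dvd_of_mul_right_dvd h)
    obtain ⟨u, rfl⟩ := ha.associated_of_dvd (ht b hb) hab
    rw [← Multiset.cons_erase hb, Multiset.prod_cons, mul_assoc, mul_dvd_mul_iff_left ha.ne_zero,
      u.isUnit.dvd_mul_left] at h
    have := ih (fun c hc => hs c (Multiset.mem_cons_of_mem hc))
      (fun c hc => ht c (Multiset.mem_of_mem_erase hc)) h
    rw [Multiset.card_cons, ← Multiset.card_erase_add_one hb]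
    omega

theorem Prime.dvd_of_dvd_mul_of_not_dvd {q x a : M} (hq : Prime q) (hqx : ¬q ∣ x)
    (h : x ∣ q * a) : x ∣ a := by
  obtain ⟨t, ht⟩ := h
  obtain ⟨t', rfl⟩ := (hq.dvd_mul.mp ⟨a, ht.symm⟩).resolve_left hqx
  exact ⟨t', mul_left_cancel₀ hq.ne_zero (by rw [ht, mul_left_comm])⟩

theorem dvd_of_dvd_prod_mul {x a : M} {s : Multiset M} (hs : ∀ q ∈ s, Prime q ∧ ¬q ∣ x)
    (h : x ∣ s.prod * a) : x ∣ a := by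
  induction s using Multiset.induction_on generalizing a with
  | empty => simpa using h
  | cons q s ih =>
    obtain ⟨hq, hqx⟩ := hs q (Multiset.mem_cons_self q s)
    rw [Multiset.prod_cons, mul_assoc] at h
    exact ih (fun r hr => hs r (Multiset.mem_cons_of_mem hr)) (hq.dvd_of_dvd_mul_of_not_dvd hqx h)

end Divisibility

theorem exists_eq_prod_mul_forall_not_dvd {ι M : Type*} [CommMonoid M] (q : ι → M) (y : M)
    (B : ℕ) (hB : ∀ s : Multiset ι, (s.map q).prod ∣ y → Multiset.card s ≤ B) :
    ∃ s : Multiset ι, ∃ z, y = (s.map q).prod * z ∧ ∀ i, ¬q i ∣ z := by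
  classical
  let divides (k : ℕ) : Prop := ∃ s : Multiset ι, Multiset.card s = k ∧ (s.map q).prod ∣ y
  obtain ⟨s, hs, z, hz⟩ := Nat.findGreatest_spec (P := divides) (Nat.zero_le B) ⟨0, rfl, by simp⟩
  refine ⟨s, z, hz, fun i ⟨w, hw⟩ => ?_⟩
  have hdvd : ((i ::ₘ s).map q).prod ∣ y :=
    ⟨w, by rw [hz, hw, Multiset.map_cons, Multiset.prod_cons]; ac_rfl⟩
  exact Nat.findGreatest_is_greatest (P := divides) (by simp [hs]) (hB _ hdvd) ⟨_, rfl, hdvd⟩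

theorem Ideal.exists_pow_mul_mem_of_fg {R : Type*} [CommSemiring R] {I J : Ideal R} (hI : I.FG)
    (f : R) (h : ∀ a ∈ I, ∃ m, f ^ m * a ∈ J) : ∃ m, ∀ a ∈ I, f ^ m * a ∈ J := by
  classical
  obtain ⟨S, rfl⟩ := hI
  choose! e he using fun s (hs : s ∈ S) => h s (Ideal.subset_span hs)
  refine ⟨S.sup e, fun a ha => ?_⟩
  induction ha using Submodule.span_induction with
  | mem s hs =>
    rw [← Nat.sub_add_cancel (Finset.le_sup hs : e s ≤ S.sup e), pow_add, mul_assoc]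
    exact J.mul_mem_left _ (he s hs)
  | zero => simp
  | add a b _ _ ha hb => rw [mul_add]; exact J.add_mem ha hb
  | smul c a _ ha => rw [smul_eq_mul, mul_left_comm]; exact J.mul_mem_left c ha

section Transcendence

variable {R A : Type*} [CommRing R] [CommRing A] [Algebra R A]

theorem Transcendental.sub_algebraMap [Nontrivial R] {x : A} (hx : Transcendental R x) (r : R) :
    Transcendental R (x - algebraMap R A r) := by
  have := hx.aeval (X - C r) (by simp) (by simp [(monic_X_sub_C r).leadingCoeff])
  rwa [map_sub, aeval_X, aeval_C] at this

theorem Transcendental.ne_zero [Nontrivial R] {x : A} (hx : Transcendental R x) : x ≠ 0 :=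
  fun h => hx (h ▸ isAlgebraic_zero)

theorem Transcendental.of_algebraMap_mul {x : A} {c : R}
    (h : Transcendental R (algebraMap R A c * x)) : Transcendental R x :=
  fun ⟨P, hP0, hPx⟩ => h ⟨P.scaleRoots c, scaleRoots_ne_zero hP0 c, scaleRoots_aeval_eq_zero hPx⟩

theorem Algebra.adjoin_singleton_sub_algebraMap (x : A) (r : R) :
    Algebra.adjoin R {x - algebraMap R A r} = Algebra.adjoin R {x} :=
  le_antisymm
    (Algebra.adjoin_singleton_le (sub_mem (Algebra.self_mem_adjoin_singleton R x)
      (Subalgebra.algebraMap_mem _ r)))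
    (Algebra.adjoin_singleton_le (by
      simpa using add_mem (Algebra.self_mem_adjoin_singleton R (x - algebraMap R A r))
        (Subalgebra.algebraMap_mem _ r)))

end Transcendence

section Retraction

variable {A : Type*} [CommRing A] {R : Subring A} {Φ : A →+* R}

theorem retraction_aeval_eq_coeff_zero (hΦ : ∀ r : R, Φ r = r) {x : A} (hx : Φ x = 0)
    (P : R[X]) : Φ (aeval x P) = P.coeff 0 := by
  have hcomp : Φ.comp (algebraMap R A) = RingHom.id R := RingHom.ext hΦ
  rw [aeval_def, hom_eval₂, hcomp, hx, coeff_zero_eq_eval_zero, eval]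

theorem X_dvd_of_retraction_aeval_eq_zero (hΦ : ∀ r : R, Φ r = r) {x : A} (hx : Φ x = 0)
    {P : R[X]} (h : Φ (aeval x P) = 0) : X ∣ P :=
  X_dvd_iff.mpr (by rwa [← retraction_aeval_eq_coeff_zero hΦ hx])

theorem dvd_of_mem_adjoin_of_retraction_eq_zero (hΦ : ∀ r : R, Φ r = r) {x z : A}
    (hx : Φ x = 0) (hz : z ∈ Algebra.adjoin R {x}) (hΦz : Φ z = 0) : x ∣ z := by
  rw [Algebra.adjoin_singleton_eq_range_aeval] at hz
  obtain ⟨P, rfl⟩ := hz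
  obtain ⟨Q, rfl⟩ := X_dvd_of_retraction_aeval_eq_zero hΦ hx hΦz
  exact ⟨aeval x Q, by simp⟩

variable [IsDomain A]

theorem retraction_eq_zero_of_mul (hΦ : ∀ r : R, Φ r = r) {c : R} (hc : (c : A) ≠ 0) {z : A}
    (h : Φ (c * z) = 0) : Φ z = 0 := by
  rw [map_mul, hΦ] at h
  exact (mul_eq_zero.mp h).resolve_left fun h0 => hc (by simp [h0])

theorem mem_adjoin_of_mul_mem_adjoin (hΦ : ∀ r : R, Φ r = r) {x : A} (hx : Φ x = 0)
    (hx0 : x ≠ 0) (hker : ∀ a ∈ RingHom.ker Φ, x ∣ a) {c : R} (hc : (c : A) ≠ 0) {a : A}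
    (ha : c * a ∈ Algebra.adjoin R {x}) : a ∈ Algebra.adjoin R {x} := by
  obtain ⟨P, hP⟩ : ∃ P, aeval x P = c * a := by
    rwa [Algebra.adjoin_singleton_eq_range_aeval, AlgHom.mem_range] at ha
  clear ha
  induction hd : P.natDegree using Nat.strong_induction_on generalizing P a with
  | _ d ih =>
  -- `a = Φ a + x b`, and `c b` is the value at `x` of `(P - C (c Φ a)) / X`, of smaller degree
  obtain ⟨b, hb⟩ := hker (a - Φ a) (by simp [hΦ])
  have hcoe (r : R) : algebraMap R A r = r := rfl
  obtain ⟨Q, hQ⟩ : X ∣ P - C (c * Φ a) :=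
    X_dvd_of_retraction_aeval_eq_zero hΦ hx (by simp [hP, hcoe, hΦ])
  have hQb : aeval x Q = c * b := mul_left_cancel₀ hx0 <| by
    have h := congrArg (aeval x) hQ
    simp only [map_sub, map_mul, aeval_X, aeval_C, hP, hcoe] at h
    linear_combination -h + (c : A) * hb
  rw [show a = Φ a + x * b by rw [← hb]; ring]
  refine add_mem (Subalgebra.algebraMap_mem _ _)
    (mul_mem (Algebra.self_mem_adjoin_singleton R x) ?_)
  by_cases hQ0 : Q = 0
  · obtain rfl : b = 0 := by simpa [hQ0, hc] using hQb.symm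
    simp
  · refine ih Q.natDegree ?_ Q hQb rfl
    have := congrArg natDegree hQ
    rw [natDegree_sub_C, natDegree_X_mul hQ0] at this
    omega

theorem exists_eq_mul_forall_mem_ker_dvd (hΦ : ∀ r : R, Φ r = r) {ι : Type*} [Fintype ι]
    {p : ι → R} (hp : ∀ i, Prime (p i : A)) {x₁ : A} (hx₁ : Φ x₁ = 0) (hx₁0 : x₁ ≠ 0) {m : ℕ}
    (hm : ∀ a ∈ RingHom.ker Φ, x₁ ∣ (∏ i, (p i : A)) ^ m * a) :
    ∃ c : R, ∃ x, x₁ = c * x ∧ Φ x = 0 ∧ ∀ a ∈ RingHom.ker Φ, x ∣ a := by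
  let q (i : ι) : A := p i
  let N : Multiset ι := m • Finset.univ.val
  have hN : (N.map q).prod = (∏ i, q i) ^ m := by
    rw [Multiset.map_nsmul, Multiset.prod_nsmul, Finset.prod_eq_multiset_prod]
  have hprime (s : Multiset ι) : ∀ a ∈ s.map q, Prime a := by simp [q, hp]
  have hcoe (s : Multiset ι) : (s.map q).prod = ((s.map p).prod : R) := by
    simp [q, SubmonoidClass.coe_multiset_prod, Multiset.map_map]
  have hne (s : Multiset ι) : ((s.map p).prod : A) ≠ 0 := by
    rw [← hcoe]; exact Multiset.prod_ne_zero fun h0 => (hprime s 0 h0).ne_zero rfl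
  have hcofactor (s : Multiset ι) (z : A) (hz : x₁ = (s.map q).prod * z) : Φ z = 0 :=
    retraction_eq_zero_of_mul hΦ (hne s) (by rw [← hcoe, ← hz, hx₁])
  obtain ⟨s, x, hx, hnd⟩ := exists_eq_prod_mul_forall_not_dvd q x₁ (m * Fintype.card ι)
    fun s ⟨z, hz⟩ => by
      have hz0 : z ≠ 0 := by rintro rfl; exact hx₁0 (by simpa using hz)
      have hdvd : (s.map q).prod ∣ (N.map q).prod := by
        have := hm z (hcofactor s z hz)
        rwa [hz, ← hN, mul_dvd_mul_iff_right hz0] at this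
      simpa [N] using Multiset.card_le_card_of_prod_dvd_prod (hprime s) (hprime N) hdvd
  refine ⟨(s.map p).prod, x, by rw [hx, hcoe], hcofactor s x hx, fun a ha => ?_⟩
  refine dvd_of_dvd_prod_mul (s := N.map q) (fun r hr => ⟨hprime N r hr, ?_⟩) ?_
  · obtain ⟨i, -, rfl⟩ := Multiset.mem_map.mp hr
    exact hnd i
  · rw [hN]
    exact (Dvd.intro_left _ hx.symm).trans (hm a ha)

end Retraction

theorem stmt9_general {A : Type*} [CommRing A] [IsDomain A] (R : Subring A)
    (Φ : A →+* R) (hΦ : ∀ r : R, Φ (r : A) = r)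
    (hfg : (RingHom.ker Φ).FG)
    (n : ℕ) (p : Fin n → R)
    (hpA : ∀ i, Prime ((p i : A)))
    (hloc : ∃ x₀ : A, Transcendental R x₀ ∧
      ∀ a : A, ∃ m : ℕ, (∏ i, (p i : A)) ^ m * a ∈ Algebra.adjoin R {x₀}) :
    ∃ x : A, Φ x = 0 ∧ Transcendental R x ∧ Algebra.adjoin R {x} = ⊤ := by
  obtain ⟨x₀, htr₀, hloc₀⟩ := hloc
  set x₁ := x₀ - (Φ x₀ : A)
  have hx₁ : Φ x₁ = 0 := by simp [x₁, hΦ]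
  have hadj : Algebra.adjoin R {x₁} = Algebra.adjoin R {x₀} :=
    Algebra.adjoin_singleton_sub_algebraMap x₀ (Φ x₀)
  have htr₁ : Transcendental R x₁ := htr₀.sub_algebraMap (Φ x₀)
  obtain ⟨m, hm⟩ := Ideal.exists_pow_mul_mem_of_fg hfg (∏ i, (p i : A)) (J := Ideal.span {x₁})
    fun a ha => (hloc₀ a).imp fun k hk => Ideal.mem_span_singleton.mpr <|
      dvd_of_mem_adjoin_of_retraction_eq_zero hΦ hx₁ (hadj ▸ hk)
        (by rw [map_mul, RingHom.mem_ker.mp ha, mul_zero])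
  obtain ⟨c, x, hx₁x, hΦx, hker⟩ := exists_eq_mul_forall_mem_ker_dvd hΦ hpA hx₁
    htr₁.ne_zero fun a ha => Ideal.mem_span_singleton.mp (hm a ha)
  have htr : Transcendental R x := .of_algebraMap_mul (c := c) (hx₁x ▸ htr₁)
  have hle : Algebra.adjoin R {x₀} ≤ Algebra.adjoin R {x} := hadj ▸ Algebra.adjoin_singleton_le
    (hx₁x ▸ mul_mem (Subalgebra.algebraMap_mem _ c) (Algebra.self_mem_adjoin_singleton R x))
  refine ⟨x, hΦx, htr, Algebra.eq_top_iff.mpr fun a => ?_⟩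
  obtain ⟨k, hk⟩ := hloc₀ a
  exact mem_adjoin_of_mul_mem_adjoin hΦ hΦx htr.ne_zero hker
    (c := (∏ i, p i) ^ k) (by simpa using pow_ne_zero k (Finset.prod_ne_zero_iff.mpr
      fun i _ => (hpA i).ne_zero)) (by simpa using hle hk)

/-- Let `R ⊆ A` be integral domains with a retraction `Φ : A → R`
with finitely generated kernel. Suppose `p₁, …, pₙ ∈ R` are prime in both `R` and
`A`, and `A[1/(p₁⋯pₙ)]` is a polynomial ring in one variable over `R[1/(p₁⋯pₙ)]`
(encoded: there is `x₀` transcendental over `R` with `(p₁⋯pₙ)ᵐ a ∈ R[x₀]` for all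
`a ∈ A` and some `m`). Then there exists `x ∈ Ker Φ` such that `A = R[x]` is a
polynomial ring in one variable over `R`. -/
theorem stmt9 {A : Type*} [CommRing A] [IsDomain A] (R : Subring A)
    (Φ : A →+* R) (hΦ : ∀ r : R, Φ (r : A) = r)
    (hfg : (RingHom.ker Φ).FG)
    (n : ℕ) (p : Fin n → R)
    (hpR : ∀ i, Prime (p i)) (hpA : ∀ i, Prime ((p i : A)))
    (hloc : ∃ x₀ : A, Transcendental R x₀ ∧
      ∀ a : A, ∃ m : ℕ, (∏ i, (p i : A)) ^ m * a ∈ Algebra.adjoin R {x₀}) :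
    ∃ x : A, Φ x = 0 ∧ Transcendental R x ∧ Algebra.adjoin R {x} = ⊤ :=
  stmt9_general R Φ hΦ hfg n p hpA hloc
end

section
/- Let R be an integral domain and A an integral domain containing R with a retraction Φ : A → R whose kernel is a principal ideal (G). If A ⊗_R K = K^{[1]} where K is the quotient field of R, then A = R[G]. -/
open Polynomial

/-- Key induction: if `r * a` is a polynomial of degree `≤ n` in `x₀`, then `a ∈ R[G]`. -/
lemma stmt11_aux {A : Type*} [CommRing A] [IsDomain A] (R : Subring A)
    (Φ : A →+* R) (hΦ : ∀ r : R, Φ (r : A) = r)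
    (G : A) (hker : RingHom.ker Φ = Ideal.span {G})
    (x₀ : A) (hinj : Function.Injective (aeval x₀ : R[X] →ₐ[R] A))
    (hk : ∀ a : A, ∃ r : R, r ≠ 0 ∧ (r : A) * a ∈ Algebra.adjoin R {x₀})
    (rG : R) (hrG : rG ≠ 0) (q : R[X]) (hq : (rG : A) * G = aeval x₀ q)
    (hq1 : 1 ≤ q.natDegree) :
    ∀ n : ℕ, ∀ a : A, ∀ r : R, r ≠ 0 → ∀ p : R[X],
      (r : A) * a = aeval x₀ p → p.natDegree ≤ n → a ∈ Algebra.adjoin R {G} := by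
  have hΦG : Φ G = 0 := by
    have : G ∈ RingHom.ker Φ := by rw [hker]; exact Ideal.mem_span_singleton_self G
    rwa [RingHom.mem_ker] at this
  intro n
  induction n using Nat.strong_induction_on with
  | _ n ih =>
    intro a r hr p hp hdeg
    -- a - Φ a ∈ ker Φ = (G)
    have hmem : a - (Φ a : A) ∈ RingHom.ker Φ := by
      rw [RingHom.mem_ker, map_sub, hΦ, sub_self]
    rw [hker, Ideal.mem_span_singleton] at hmem
    obtain ⟨b, hb⟩ := hmem
    by_cases hb0 : b = 0
    · have ha : a = (Φ a : A) := by
        rw [hb0, mul_zero] at hb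
        exact sub_eq_zero.mp hb
      rw [ha]
      exact Subalgebra.algebraMap_mem (Algebra.adjoin R {G}) (Φ a)
    · obtain ⟨s, hs, hsb⟩ := hk ((r : A) * b)
      rw [Algebra.adjoin_singleton_eq_range_aeval] at hsb
      obtain ⟨t, ht'⟩ := hsb
      have ht : (aeval x₀ : R[X] →ₐ[R] A) t = (s : A) * ((r : A) * b) := ht'
      -- polynomial identity q * t = C s * (C rG * (p - C (r * Φ a)))
      have hid : q * t = C s * (C rG * (p - C (r * Φ a))) := by
        apply hinj
        have hAM : ∀ c : R, algebraMap R A c = (c : A) := fun _ => rfl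
        simp only [map_mul, map_sub, aeval_C, hAM]
        rw [← hq, ht, ← hp]
        linear_combination (-((s : A) * (rG : A) * (r : A))) * hb
      -- degrees
      have hGne : G ≠ 0 := by
        intro h0
        rw [h0, mul_zero] at hq
        have : q = 0 := hinj (by simpa using hq.symm)
        rw [this] at hq1; simp at hq1
      have hbA : (s : A) * ((r : A) * b) ≠ 0 := by
        apply mul_ne_zero _ (mul_ne_zero _ hb0)
        · exact fun h => hs (by exact_mod_cast h)
        · exact fun h => hr (by exact_mod_cast h)
      have ht0 : t ≠ 0 := by
        intro h0
        rw [h0, map_zero] at ht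
        exact hbA ht.symm
      have hq0 : q ≠ 0 := by
        intro h0
        rw [h0, map_zero] at hq
        have hrGA : (rG : A) ≠ 0 := fun h => hrG (by exact_mod_cast h)
        exact (mul_ne_zero hrGA hGne) hq
      have hdegmul : q.natDegree + t.natDegree = (q * t).natDegree :=
        (natDegree_mul hq0 ht0).symm
      have hdle : (q * t).natDegree ≤ p.natDegree := by
        rw [hid]
        calc (C s * (C rG * (p - C (r * Φ a)))).natDegree
            ≤ (C rG * (p - C (r * Φ a))).natDegree := natDegree_C_mul_le _ _
          _ ≤ (p - C (r * Φ a)).natDegree := natDegree_C_mul_le _ _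
          _ ≤ max p.natDegree (C (r * Φ a)).natDegree := natDegree_sub_le _ _
          _ ≤ p.natDegree := by simp only [natDegree_C]; omega
      have htlt : t.natDegree < n := by omega
      -- apply induction hypothesis to b
      have hbmem : b ∈ Algebra.adjoin R {G} := by
        refine ih t.natDegree htlt b (s * r) (mul_ne_zero hs hr) t ?_ le_rfl
        push_cast
        rw [ht]
        ring
      have : a = G * b + (Φ a : A) := sub_eq_iff_eq_add.mp hb
      rw [this]
      exact add_mem (mul_mem (Algebra.self_mem_adjoin_singleton R G) hbmem)
        (Subalgebra.algebraMap_mem _ (Φ a))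

/-- Let `R` be an integral domain with quotient field `K` and `A`
an integral domain containing `R` with a retraction `Φ : A → R` whose kernel is the
principal ideal `(G)`. If `A ⊗_R K = K^{[1]}` (encoded as in Statement 10), then
`A = R[G]`. -/
theorem stmt11 {A : Type*} [CommRing A] [IsDomain A] (R : Subring A)
    (Φ : A →+* R) (hΦ : ∀ r : R, Φ (r : A) = r)
    (G : A) (hker : RingHom.ker Φ = Ideal.span {G})
    (hK : ∃ x₀ : A, Transcendental R x₀ ∧
      ∀ a : A, ∃ r : R, r ≠ 0 ∧ (r : A) * a ∈ Algebra.adjoin R {x₀}) :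
    Algebra.adjoin R {G} = ⊤ := by
  obtain ⟨x₀, htr, hk⟩ := hK
  have hΦG : Φ G = 0 := by
    have : G ∈ RingHom.ker Φ := by rw [hker]; exact Ideal.mem_span_singleton_self G
    rwa [RingHom.mem_ker] at this
  by_cases hG : G = 0
  · -- ker Φ = 0, so A = R
    rw [eq_top_iff]
    intro a _
    have hmem : a - (Φ a : A) ∈ RingHom.ker Φ := by
      rw [RingHom.mem_ker, map_sub, hΦ, sub_self]
    rw [hker, hG, Ideal.span_singleton_eq_bot.mpr rfl, Ideal.mem_bot, sub_eq_zero] at hmem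
    rw [hmem]
    exact Subalgebra.algebraMap_mem _ (Φ a)
  · have hinj : Function.Injective (aeval x₀ : R[X] →ₐ[R] A) := by
      rw [injective_iff_map_eq_zero]
      intro p hp
      exact transcendental_iff.mp htr p hp
    obtain ⟨rG, hrG, hGmem⟩ := hk G
    rw [Algebra.adjoin_singleton_eq_range_aeval] at hGmem
    obtain ⟨q, hq'⟩ := hGmem
    have hq : (aeval x₀ : R[X] →ₐ[R] A) q = (rG : A) * G := hq'
    have hrGA : (rG : A) ≠ 0 := fun h => hrG (by exact_mod_cast h)
    have hq1 : 1 ≤ q.natDegree := by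
      by_contra h
      have hq0 : q.natDegree = 0 := by omega
      obtain ⟨c, hc⟩ := natDegree_eq_zero.mp hq0
      rw [← hc] at hq
      have hcA : (aeval x₀ : R[X] →ₐ[R] A) (C c) = (c : A) := aeval_C _ _
      rw [hcA] at hq
      -- apply Φ: rG * Φ G = c, so c = 0
      have : (rG : R) * Φ G = c := by
        have := congrArg Φ hq.symm
        rwa [map_mul, hΦ, hΦ] at this
      rw [hΦG, mul_zero] at this
      rw [← this] at hq
      simp only [ZeroMemClass.coe_zero] at hq
      exact (mul_ne_zero hrGA hG) hq.symm
    rw [eq_top_iff]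
    intro a _
    obtain ⟨r, hr, hmem⟩ := hk a
    rw [Algebra.adjoin_singleton_eq_range_aeval] at hmem
    obtain ⟨p, hp⟩ := hmem
    exact stmt11_aux R Φ hΦ G hker x₀ hinj hk rG hrG q hq.symm hq1
      p.natDegree a r hr p hp.symm le_rfl
end

section
/- Let R be a Noetherian ring and R₁ ⊇ R a ring that is finitely generated as an R-module. If A is a flat R-algebra such that A ⊗_R R₁ is a finitely generated R₁-algebra, then A is a finitely generated R-algebra. -/
/-!
`A ⊗[R] R₁` is module-finite over `A` (base change of `R₁`), contains `A` because `A` is flat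
and `R → R₁` is injective, and is of finite type over `R` because `R₁` is finite over `R`.
The Artin–Tate lemma then descends finite type from `A ⊗[R] R₁` to `A`.
-/

open TensorProduct

theorem Algebra.FiniteType.of_finite_of_injective (R B C : Type*) [CommRing R]
    [IsNoetherianRing R] [CommRing B] [CommRing C] [Algebra R B] [Algebra B C] [Algebra R C]
    [IsScalarTower R B C] [Algebra.FiniteType R C] [Module.Finite B C]
    (hinj : Function.Injective (algebraMap B C)) : Algebra.FiniteType R B :=
  ⟨fg_of_fg_of_fg R B C Algebra.FiniteType.out Module.Finite.fg_top hinj⟩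

/-- Let `R` be a Noetherian ring and `R₁ ⊇ R` a ring that is
finitely generated as an `R`-module. If `A` is a flat `R`-algebra such that
`A ⊗_R R₁` is a finitely generated `R₁`-algebra, then `A` is a finitely generated
`R`-algebra. -/
theorem stmt12 {R R₁ A : Type*} [CommRing R] [IsNoetherianRing R]
    [CommRing R₁] [Algebra R R₁] (hinj : Function.Injective (algebraMap R R₁))
    [Module.Finite R R₁]
    [CommRing A] [Algebra R A] [Module.Flat R A]
    (hfg : Algebra.FiniteType R₁ (R₁ ⊗[R] A)) :
    Algebra.FiniteType R A := by
  have : Algebra.FiniteType R (A ⊗[R] R₁) :=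
    (Algebra.FiniteType.trans (Module.Finite.finiteType R₁) hfg).equiv
      (Algebra.TensorProduct.comm R R₁ A)
  exact Algebra.FiniteType.of_finite_of_injective R A (A ⊗[R] R₁)
    (Algebra.TensorProduct.includeLeft_injective (S := A) hinj)
end

section
/- Let R be a ring, A an R-algebra, and R' a faithfully flat R-algebra such that A ⊗_R R' is a finitely generated R'-algebra. Then A is a finitely generated R-algebra. -/
open TensorProduct

/-- Let `R` be a ring, `A` an `R`-algebra, and `R'` a faithfully
flat `R`-algebra such that `A ⊗_R R'` is a finitely generated `R'`-algebra. Then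
`A` is a finitely generated `R`-algebra. -/
theorem stmt13 {R R' A : Type*} [CommRing R] [CommRing R'] [Algebra R R']
    [Module.FaithfullyFlat R R']
    [CommRing A] [Algebra R A]
    (hfg : Algebra.FiniteType R' (R' ⊗[R] A)) :
    Algebra.FiniteType R A :=
  Algebra.FiniteType.of_finiteType_tensorProduct_of_faithfullyFlat R'
end
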